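/- Let F : ℝᵐ → ℝ and G : ℝⁿ → ℝ be positive-definite, one-homogeneous convex functions with dual functions F*, G*, and let T : ℝⁿ → ℝᵐ be a linear map with adjoint Tᵀ. Then for every u ∈ ℝⁿ: min_{x : G(x) ≤ 1} (F(T x) − ⟨x, u⟩) = − min_{y : F*(y) ≤ 1} G*(u − Tᵀ y), and max_{x : G(x) ≤ 1} (F(T x) − ⟨x, u⟩) = max_{y : F*(y) ≤ 1} G*(Tᵀ y − u) (all four extrema are attained). -/

import Mathlib

open scoped RealInnerProductSpace

/-- The dual function `F*(y) = sup_{x ≠ 0} ⟨y, x⟩ / F(x)` of a positive-definite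
one-homogeneous convex function. -/
noncomputable def dualFn {m : ℕ} (F : EuclideanSpace ℝ (Fin m) → ℝ) :
    EuclideanSpace ℝ (Fin m) → ℝ :=
  fun y => sSup {r | ∃ x : EuclideanSpace ℝ (Fin m), x ≠ 0 ∧ r = ⟪y, x⟫ / F x}

section Gauge
section Gauge
variable {m : ℕ} {F : EuclideanSpace ℝ (Fin m) → ℝ}

theorem stmt11_zero (hhom : ∀ t : ℝ, 0 < t → ∀ x, F (t • x) = t * F x) : F 0 = 0 := by
  have h := hhom 2 (by norm_num) 0
  rw [smul_zero] at h; linarith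

theorem stmt11_cont (hconv : ConvexOn ℝ Set.univ F) : Continuous F := by
  rw [← continuousOn_univ]
  exact hconv.continuousOn isOpen_univ

theorem stmt11_lower (hhom : ∀ t : ℝ, 0 < t → ∀ x, F (t • x) = t * F x)
    (hconv : ConvexOn ℝ Set.univ F) (hpos : ∀ x, x ≠ 0 → 0 < F x) :
    ∃ ε : ℝ, 0 < ε ∧ ∀ x, ε * ‖x‖ ≤ F x := by
  rcases subsingleton_or_nontrivial (EuclideanSpace ℝ (Fin m)) with h | h
  · refine ⟨1, one_pos, fun x => ?_⟩
    have hx : x = 0 := Subsingleton.elim x 0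
    simp [hx, stmt11_zero hhom]
  · obtain ⟨x₀, hx₀, hmin⟩ := (isCompact_sphere (0 : EuclideanSpace ℝ (Fin m)) 1).exists_isMinOn
      (NormedSpace.sphere_nonempty.2 zero_le_one) (stmt11_cont hconv).continuousOn
    have hx₀n : ‖x₀‖ = 1 := mem_sphere_zero_iff_norm.1 hx₀
    have hx₀0 : x₀ ≠ 0 := by intro h0; simp [h0] at hx₀n
    refine ⟨F x₀, hpos x₀ hx₀0, fun x => ?_⟩
    rcases eq_or_ne x 0 with rfl | hx
    · simp [stmt11_zero hhom]
    · have hnx : (0:ℝ) < ‖x‖ := norm_pos_iff.2 hx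
      have hmem : ‖x‖⁻¹ • x ∈ Metric.sphere (0 : EuclideanSpace ℝ (Fin m)) 1 := by
        simp [norm_smul, abs_of_pos (inv_pos.2 hnx), inv_mul_cancel₀ hnx.ne']
      have h1 := hmin hmem
      have h2 : F x = ‖x‖ * F (‖x‖⁻¹ • x) := by
        rw [← hhom ‖x‖ hnx (‖x‖⁻¹ • x), smul_smul, mul_inv_cancel₀ hnx.ne', one_smul]
      calc F x₀ * ‖x‖ ≤ F (‖x‖⁻¹ • x) * ‖x‖ := mul_le_mul_of_nonneg_right h1 hnx.le
        _ = F x := by rw [mul_comm, ← h2]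

theorem stmt11_upper (hhom : ∀ t : ℝ, 0 < t → ∀ x, F (t • x) = t * F x)
    (hconv : ConvexOn ℝ Set.univ F) (hnonneg : ∀ x, 0 ≤ F x) :
    ∃ M : ℝ, 0 < M ∧ ∀ x, F x ≤ M * ‖x‖ := by
  rcases subsingleton_or_nontrivial (EuclideanSpace ℝ (Fin m)) with h | h
  · refine ⟨1, one_pos, fun x => ?_⟩
    have hx : x = 0 := Subsingleton.elim x 0
    simp [hx, stmt11_zero hhom]
  · obtain ⟨x₀, hx₀, hmax⟩ := (isCompact_sphere (0 : EuclideanSpace ℝ (Fin m)) 1).exists_isMaxOn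
      (NormedSpace.sphere_nonempty.2 zero_le_one) (stmt11_cont hconv).continuousOn
    have h0 : 0 ≤ F x₀ := hnonneg x₀
    refine ⟨F x₀ + 1, by linarith, fun x => ?_⟩
    rcases eq_or_ne x 0 with rfl | hx
    · simp [stmt11_zero hhom]
    · have hnx : (0:ℝ) < ‖x‖ := norm_pos_iff.2 hx
      have hmem : ‖x‖⁻¹ • x ∈ Metric.sphere (0 : EuclideanSpace ℝ (Fin m)) 1 := by
        simp [norm_smul, abs_of_pos (inv_pos.2 hnx), inv_mul_cancel₀ hnx.ne']
      have h1 : F (‖x‖⁻¹ • x) ≤ F x₀ + 1 := le_trans (hmax hmem) (by linarith)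
      have h2 : F x = ‖x‖ * F (‖x‖⁻¹ • x) := by
        rw [← hhom ‖x‖ hnx (‖x‖⁻¹ • x), smul_smul, mul_inv_cancel₀ hnx.ne', one_smul]
      calc F x = F (‖x‖⁻¹ • x) * ‖x‖ := by rw [mul_comm, ← h2]
        _ ≤ (F x₀ + 1) * ‖x‖ := mul_le_mul_of_nonneg_right h1 hnx.le

section Gauge
variable {m : ℕ} {F : EuclideanSpace ℝ (Fin m) → ℝ}

theorem stmt11_dual_bdd {ε : ℝ} (hε : 0 < ε) (hlow : ∀ x, ε * ‖x‖ ≤ F x)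
    (y : EuclideanSpace ℝ (Fin m)) :
    BddAbove {r | ∃ x : EuclideanSpace ℝ (Fin m), x ≠ 0 ∧ r = ⟪y, x⟫ / F x} := by
  refine ⟨‖y‖ / ε, fun r hr => ?_⟩
  obtain ⟨x, hx, rfl⟩ := hr
  have hnx : (0:ℝ) < ‖x‖ := norm_pos_iff.2 hx
  have hFx : 0 < F x := lt_of_lt_of_le (by positivity) (hlow x)
  rw [div_le_div_iff₀ hFx hε]
  have h1 : ⟪y, x⟫ ≤ ‖y‖ * ‖x‖ := real_inner_le_norm y x
  nlinarith [hlow x, mul_le_mul_of_nonneg_left (hlow x) (norm_nonneg y)]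

theorem stmt11_dual_nonneg {ε : ℝ} (hε : 0 < ε) (hlow : ∀ x, ε * ‖x‖ ≤ F x)
    (y : EuclideanSpace ℝ (Fin m)) : 0 ≤ dualFn F y := by
  rcases subsingleton_or_nontrivial (EuclideanSpace ℝ (Fin m)) with h | h
  · have : {r | ∃ x : EuclideanSpace ℝ (Fin m), x ≠ 0 ∧ r = ⟪y, x⟫ / F x} = ∅ := by
      ext r; simp only [Set.mem_setOf_eq, Set.mem_empty_iff_false, iff_false]
      rintro ⟨x, hx, -⟩; exact hx (Subsingleton.elim x 0)
    rw [dualFn, this, Real.sSup_empty]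
  · obtain ⟨x, hx⟩ := exists_ne (0 : EuclideanSpace ℝ (Fin m))
    have hFx : 0 < F x := (mul_pos hε (norm_pos_iff.2 hx)).trans_le (hlow x)
    have hFx' : 0 < F (-x) := by
      have : (0:ℝ) < ‖-x‖ := by simpa using norm_pos_iff.2 hx
      exact lt_of_lt_of_le (by positivity) (hlow (-x))
    rcases le_or_gt 0 ⟪y, x⟫ with hyx | hyx
    · have : ⟪y, x⟫ / F x ∈ {r | ∃ x : EuclideanSpace ℝ (Fin m), x ≠ 0 ∧ r = ⟪y, x⟫ / F x} :=
        ⟨x, hx, rfl⟩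
      exact le_trans (by positivity) (le_csSup (stmt11_dual_bdd hε hlow y) this)
    · have hmem : ⟪y, -x⟫ / F (-x) ∈ {r | ∃ x : EuclideanSpace ℝ (Fin m), x ≠ 0 ∧ r = ⟪y, x⟫ / F x} :=
        ⟨-x, neg_ne_zero.2 hx, rfl⟩
      have h0 : 0 ≤ ⟪y, -x⟫ / F (-x) := by
        rw [inner_neg_right]
        exact div_nonneg (by linarith) hFx'.le
      exact le_trans h0 (le_csSup (stmt11_dual_bdd hε hlow y) hmem)

theorem stmt11_inner_le_dual {ε : ℝ} (hε : 0 < ε) (hlow : ∀ x, ε * ‖x‖ ≤ F x) (hF0 : F 0 = 0)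
    (y x : EuclideanSpace ℝ (Fin m)) : ⟪y, x⟫ ≤ dualFn F y * F x := by
  rcases eq_or_ne x 0 with rfl | hx
  · simp [hF0]
  · have hFx : 0 < F x := (mul_pos hε (norm_pos_iff.2 hx)).trans_le (hlow x)
    have hmem : ⟪y, x⟫ / F x ∈ {r | ∃ x : EuclideanSpace ℝ (Fin m), x ≠ 0 ∧ r = ⟪y, x⟫ / F x} :=
      ⟨x, hx, rfl⟩
    have := le_csSup (stmt11_dual_bdd hε hlow y) hmem
    calc ⟪y, x⟫ = ⟪y, x⟫ / F x * F x := by field_simp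
      _ ≤ dualFn F y * F x := mul_le_mul_of_nonneg_right this hFx.le

theorem stmt11_dual_le {y : EuclideanSpace ℝ (Fin m)} {c : ℝ} (hc : 0 ≤ c)
    (hpos : ∀ x, x ≠ 0 → 0 < F x)
    (h : ∀ x, ⟪y, x⟫ ≤ c * F x) : dualFn F y ≤ c := by
  rcases Set.eq_empty_or_nonempty
      {r | ∃ x : EuclideanSpace ℝ (Fin m), x ≠ 0 ∧ r = ⟪y, x⟫ / F x} with he | hne
  · rw [dualFn, he, Real.sSup_empty]; exact hc
  · refine csSup_le hne ?_
    rintro r ⟨x, hx, rfl⟩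
    rw [div_le_iff₀ (hpos x hx)]
    exact h x

theorem stmt11_ball_compact {ε : ℝ} (hε : 0 < ε) (hlow : ∀ x, ε * ‖x‖ ≤ F x)
    (hcont : Continuous F) : IsCompact {x | F x ≤ 1} := by
  refine (isCompact_closedBall (0 : EuclideanSpace ℝ (Fin m)) ε⁻¹).of_isClosed_subset
    (isClosed_le hcont continuous_const) ?_
  intro x hx
  rw [Set.mem_setOf_eq] at hx
  rw [Metric.mem_closedBall, dist_zero_right, ← mul_le_mul_iff_right₀ hε, mul_inv_cancel₀ hε.ne']
  exact (hlow x).trans hx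

theorem stmt11_dual_cont {ε : ℝ} (hε : 0 < ε) (hlow : ∀ x, ε * ‖x‖ ≤ F x)
    (hF0 : F 0 = 0) (hpos : ∀ x, x ≠ 0 → 0 < F x) : Continuous (dualFn F) := by
  have key : ∀ w w' : EuclideanSpace ℝ (Fin m),
      dualFn F w ≤ dualFn F w' + ε⁻¹ * ‖w - w'‖ := by
    intro w w'
    refine stmt11_dual_le ?_ hpos ?_
    · have := stmt11_dual_nonneg hε hlow w'
      positivity
    · intro x
      have h1 : ⟪w, x⟫ = ⟪w', x⟫ + ⟪w - w', x⟫ := by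
        rw [← inner_add_left]
        congr 1
        abel
      have h2 : ⟪w', x⟫ ≤ dualFn F w' * F x := stmt11_inner_le_dual hε hlow hF0 w' x
      have h3 : ⟪w - w', x⟫ ≤ ‖w - w'‖ * ‖x‖ := real_inner_le_norm _ _
      have h4 : ‖x‖ ≤ ε⁻¹ * F x := by
        rw [← mul_le_mul_iff_right₀ hε, ← mul_assoc, mul_inv_cancel₀ hε.ne', one_mul]
        exact hlow x
      have h5 : ‖w - w'‖ * ‖x‖ ≤ ‖w - w'‖ * (ε⁻¹ * F x) :=
        mul_le_mul_of_nonneg_left h4 (norm_nonneg _)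
      calc ⟪w, x⟫ ≤ dualFn F w' * F x + ‖w - w'‖ * (ε⁻¹ * F x) := by
            rw [h1]; exact add_le_add h2 (h3.trans h5)
        _ = (dualFn F w' + ε⁻¹ * ‖w - w'‖) * F x := by ring
  have hlip : LipschitzWith (Real.toNNReal ε⁻¹) (dualFn F) := by
    refine LipschitzWith.of_dist_le_mul fun w w' => ?_
    rw [Real.dist_eq, Real.coe_toNNReal _ (by positivity), dist_eq_norm]
    rw [abs_sub_le_iff]
    constructor
    · have := key w w'; linarith [this]
    · have := key w' w
      rw [norm_sub_rev] at this
      linarith [this]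
  exact hlip.continuous

theorem stmt11_dual_ball_compact {ε M : ℝ} (hε : 0 < ε) (hlow : ∀ x, ε * ‖x‖ ≤ F x)
    (hM : 0 < M) (hupp : ∀ x, F x ≤ M * ‖x‖) (hF0 : F 0 = 0)
    (hpos : ∀ x, x ≠ 0 → 0 < F x) :
    IsCompact {y | dualFn F y ≤ 1} := by
  refine (isCompact_closedBall (0 : EuclideanSpace ℝ (Fin m)) M).of_isClosed_subset
    (isClosed_le (stmt11_dual_cont hε hlow hF0 hpos) continuous_const) ?_
  intro y hy
  rw [Set.mem_setOf_eq] at hy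
  rw [Metric.mem_closedBall, dist_zero_right]
  rcases eq_or_ne y 0 with rfl | hy0
  · simp [hM.le]
  · have hny : (0:ℝ) < ‖y‖ := norm_pos_iff.2 hy0
    have hFy : 0 < F y := hpos y hy0
    have hmem : ⟪y, y⟫ / F y ∈ {r | ∃ x : EuclideanSpace ℝ (Fin m), x ≠ 0 ∧ r = ⟪y, x⟫ / F x} :=
      ⟨y, hy0, rfl⟩
    have h1 : ⟪y, y⟫ / F y ≤ dualFn F y := le_csSup (stmt11_dual_bdd hε hlow y) hmem
    have h2 : ⟪y, y⟫ / F y ≤ 1 := h1.trans hy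
    rw [div_le_one hFy, real_inner_self_eq_norm_sq] at h2
    have h3 := (h2.trans (hupp y))
    nlinarith

theorem stmt11_dual_attained {ε : ℝ} (hε : 0 < ε) (hlow : ∀ x, ε * ‖x‖ ≤ F x)
    (hhom : ∀ t : ℝ, 0 < t → ∀ x, F (t • x) = t * F x)
    (hcont : Continuous F) (hpos : ∀ x, x ≠ 0 → 0 < F x)
    (y : EuclideanSpace ℝ (Fin m)) :
    ∃ x, F x ≤ 1 ∧ ⟪y, x⟫ = dualFn F y := by
  have hF0 : F 0 = 0 := stmt11_zero hhom
  have hne : ({x | F x ≤ 1} : Set (EuclideanSpace ℝ (Fin m))).Nonempty :=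
    ⟨0, by simp [hF0]⟩
  obtain ⟨x₀, hx₀, hmax⟩ := (stmt11_ball_compact hε hlow hcont).exists_isMaxOn hne
    (Continuous.continuousOn (continuous_const.inner continuous_id : Continuous fun x => ⟪y, x⟫))
  rw [Set.mem_setOf_eq] at hx₀
  refine ⟨x₀, hx₀, le_antisymm ?_ ?_⟩
  · calc ⟪y, x₀⟫ ≤ dualFn F y * F x₀ := stmt11_inner_le_dual hε hlow hF0 y x₀
      _ ≤ dualFn F y * 1 := mul_le_mul_of_nonneg_left hx₀ (stmt11_dual_nonneg hε hlow y)
      _ = dualFn F y := mul_one _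
  · have hs0 : 0 ≤ ⟪y, x₀⟫ := by
      have := hmax (by simp [hF0] : (0:EuclideanSpace ℝ (Fin m)) ∈ {x | F x ≤ 1})
      simpa using this
    refine stmt11_dual_le hs0 hpos fun x => ?_
    rcases eq_or_ne x 0 with rfl | hx
    · simp [hF0]
    · have hFx : 0 < F x := hpos x hx
      have hmem : (F x)⁻¹ • x ∈ {x | F x ≤ 1} := by
        rw [Set.mem_setOf_eq, hhom _ (inv_pos.2 hFx), inv_mul_cancel₀ hFx.ne']
      have h2 : ⟪y, (F x)⁻¹ • x⟫ = (F x)⁻¹ * ⟪y, x⟫ := real_inner_smul_right y x _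
      have h1 : (F x)⁻¹ * ⟪y, x⟫ ≤ ⟪y, x₀⟫ := le_of_eq_of_le h2.symm (hmax hmem)
      calc ⟪y, x⟫ = F x * ((F x)⁻¹ * ⟪y, x⟫) := by field_simp
        _ ≤ F x * ⟪y, x₀⟫ := mul_le_mul_of_nonneg_left h1 hFx.le
        _ = ⟪y, x₀⟫ * F x := mul_comm _ _

theorem stmt11_bidual (hconv : ConvexOn ℝ Set.univ F)
    (hhom : ∀ t : ℝ, 0 < t → ∀ x, F (t • x) = t * F x)
    (hnonneg : ∀ x, 0 ≤ F x) (hpos : ∀ x, x ≠ 0 → 0 < F x)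
    (z : EuclideanSpace ℝ (Fin m)) :
    ∃ y, dualFn F y ≤ 1 ∧ ⟪y, z⟫ = F z := by
  obtain ⟨ε, hε, hlow⟩ := stmt11_lower hhom hconv hpos
  obtain ⟨M, hM, hupp⟩ := stmt11_upper hhom hconv hnonneg
  have hF0 : F 0 = 0 := stmt11_zero hhom
  have hcont : Continuous F := stmt11_cont hconv
  -- dual ball is compact and nonempty
  have hdb : IsCompact {y : EuclideanSpace ℝ (Fin m) | dualFn F y ≤ 1} :=
    stmt11_dual_ball_compact hε hlow hM hupp hF0 hpos
  have hdne : ({y : EuclideanSpace ℝ (Fin m) | dualFn F y ≤ 1}).Nonempty := by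
    refine ⟨0, stmt11_dual_le zero_le_one hpos fun x => ?_⟩
    simp [hnonneg x]
  obtain ⟨y₀, hy₀, hmax⟩ := hdb.exists_isMaxOn hdne
    ((continuous_id.inner continuous_const : Continuous fun y : EuclideanSpace ℝ (Fin m) => ⟪y, z⟫).continuousOn)
  rw [Set.mem_setOf_eq] at hy₀
  set s : ℝ := ⟪y₀, z⟫ with hs
  have hsle : s ≤ F z := by
    calc s ≤ dualFn F y₀ * F z := stmt11_inner_le_dual hε hlow hF0 y₀ z
      _ ≤ 1 * F z := mul_le_mul_of_nonneg_right hy₀ (hnonneg z)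
      _ = F z := one_mul _
  refine ⟨y₀, hy₀, ?_⟩
  by_contra hne
  have hslt : s < F z := lt_of_le_of_ne hsle hne
  -- the epigraph cone
  set K : Set (EuclideanSpace ℝ (Fin m) × ℝ) := {p | F p.1 ≤ p.2} with hK
  have hKconv : Convex ℝ K := by
    rintro ⟨p1, p2⟩ hp ⟨q1, q2⟩ hq a b ha hb hab
    simp only [hK, Set.mem_setOf_eq] at hp hq ⊢
    calc F (a • p1 + b • q1) ≤ a * F p1 + b * F q1 :=
          hconv.2 (Set.mem_univ p1) (Set.mem_univ q1) ha hb hab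
      _ ≤ a * p2 + b * q2 := by
          have := mul_le_mul_of_nonneg_left hp ha
          have := mul_le_mul_of_nonneg_left hq hb
          linarith
  have hKclosed : IsClosed K :=
    isClosed_le (hcont.comp continuous_fst) continuous_snd
  have hzs : ((z, s) : EuclideanSpace ℝ (Fin m) × ℝ) ∉ K := by
    simp only [hK, Set.mem_setOf_eq, not_le]
    exact hslt
  obtain ⟨f, β, hfK, hfzs⟩ := geometric_hahn_banach_closed_point hKconv hKclosed hzs
  have hβpos : 0 < β := by
    have h0K : ((0, 0) : EuclideanSpace ℝ (Fin m) × ℝ) ∈ K := by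
      simp [hK, hF0]
    have := hfK _ h0K
    rwa [Prod.mk_zero_zero, map_zero] at this
  have hfle : ∀ p ∈ K, f p ≤ 0 := by
    intro p hp
    by_contra hfp
    push_neg at hfp
    have ht : (0:ℝ) < β / f p := div_pos hβpos hfp
    have htp : (β / f p) • p ∈ K := by
      simp only [hK, Set.mem_setOf_eq] at hp ⊢
      rw [Prod.smul_fst, Prod.smul_snd, hhom _ ht, smul_eq_mul]
      exact mul_le_mul_of_nonneg_left hp ht.le
    have := hfK _ htp
    rw [map_smul, smul_eq_mul, div_mul_cancel₀ _ (ne_of_gt hfp)] at this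
    exact lt_irrefl β this
  set r : ℝ := f (0, 1) with hr
  have hr0 : r ≤ 0 := hfle (0, 1) (by simp [hK, hF0])
  set g : EuclideanSpace ℝ (Fin m) → ℝ := fun x => f (x, 0) with hg
  have hfsplit : ∀ (x : EuclideanSpace ℝ (Fin m)) (t : ℝ), f (x, t) = g x + t * r := by
    intro x t
    have : ((x, t) : EuclideanSpace ℝ (Fin m) × ℝ) = (x, 0) + t • ((0 : EuclideanSpace ℝ (Fin m)), (1:ℝ)) := by
      simp [Prod.ext_iff]
    rw [this, map_add, map_smul, smul_eq_mul]
  have hgF : ∀ x, g x + F x * r ≤ 0 := by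
    intro x
    have := hfle (x, F x) (by simp [hK])
    rwa [hfsplit] at this
  have hrneg : r < 0 := by
    rcases lt_or_eq_of_le hr0 with h | h
    · exact h
    · exfalso
      have hg0 : ∀ x, g x ≤ 0 := by
        intro x
        have h2 := hgF x
        rw [h] at h2
        simpa using h2
      have hgz : g z = 0 := le_antisymm (hg0 z) (by
        have h1 := hg0 (-z)
        have h2 : g (-z) = -g z := by rw [hg]; simp [← map_neg f, Prod.neg_mk]
        linarith [h2 ▸ h1])
      have h3 := hfzs
      rw [hfsplit z s, hgz, h] at h3
      simp at h3
      linarith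
  -- build the dual vector
  set gl : EuclideanSpace ℝ (Fin m) →L[ℝ] ℝ := f.comp (ContinuousLinearMap.inl ℝ _ ℝ) with hgl
  have hglx : ∀ x, gl x = g x := fun x => rfl
  set y : EuclideanSpace ℝ (Fin m) :=
    (InnerProductSpace.toDual ℝ (EuclideanSpace ℝ (Fin m))).symm ((-r)⁻¹ • gl) with hy
  have hyx : ∀ x, ⟪y, x⟫ = (-r)⁻¹ * g x := by
    intro x
    rw [hy, InnerProductSpace.toDual_symm_apply]
    simp [hglx]
  have hnr : (0:ℝ) < -r := neg_pos.2 hrneg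
  have hydual : dualFn F y ≤ 1 := by
    refine stmt11_dual_le zero_le_one hpos fun x => ?_
    rw [hyx, one_mul]
    have := hgF x
    rw [← mul_le_mul_iff_right₀ hnr, ← mul_assoc, mul_inv_cancel₀ hnr.ne', one_mul]
    nlinarith
  have hyz : s < ⟪y, z⟫ := by
    have h1 : 0 < g z + s * r := lt_trans hβpos (by rw [← hfsplit]; exact hfzs)
    rw [hyx]
    rw [← mul_lt_mul_iff_right₀ hnr, ← mul_assoc, mul_inv_cancel₀ hnr.ne', one_mul]
    nlinarith
  have hle : ⟪y, z⟫ ≤ s := hmax hydual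
  linarith

theorem stmt11_dual_ball_convex (hpos : ∀ x, x ≠ 0 → 0 < F x)
    {ε : ℝ} (hε : 0 < ε) (hlow : ∀ x, ε * ‖x‖ ≤ F x) (hF0 : F 0 = 0) :
    Convex ℝ {y : EuclideanSpace ℝ (Fin m) | dualFn F y ≤ 1} := by
  intro y₁ hy₁ y₂ hy₂ a b ha hb hab
  rw [Set.mem_setOf_eq] at hy₁ hy₂ ⊢
  refine stmt11_dual_le zero_le_one hpos fun x => ?_
  have h1 : ⟪y₁, x⟫ ≤ dualFn F y₁ * F x := stmt11_inner_le_dual hε hlow hF0 y₁ x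
  have h2 : ⟪y₂, x⟫ ≤ dualFn F y₂ * F x := stmt11_inner_le_dual hε hlow hF0 y₂ x
  have hFx : 0 ≤ F x := le_trans (by positivity) (hlow x)
  have e : ⟪a • y₁ + b • y₂, x⟫ = a * ⟪y₁, x⟫ + b * ⟪y₂, x⟫ := by
    rw [inner_add_left, real_inner_smul_left, real_inner_smul_left]
  rw [e, one_mul]
  have d1 : dualFn F y₁ * F x ≤ 1 * F x := mul_le_mul_of_nonneg_right hy₁ hFx
  have d2 : dualFn F y₂ * F x ≤ 1 * F x := mul_le_mul_of_nonneg_right hy₂ hFx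
  nlinarith [mul_le_mul_of_nonneg_left (h1.trans d1) ha,
    mul_le_mul_of_nonneg_left (h2.trans d2) hb]

end Gauge

section Sep

theorem stmt11_mem_S {m n : ℕ} {F : EuclideanSpace ℝ (Fin m) → ℝ}
    {G : EuclideanSpace ℝ (Fin n) → ℝ}
    (hFconv : ConvexOn ℝ Set.univ F)
    (hFhom : ∀ t : ℝ, 0 < t → ∀ x, F (t • x) = t * F x)
    (hFnonneg : ∀ x, 0 ≤ F x) (hFpos : ∀ x, x ≠ 0 → 0 < F x)
    (hGconv : ConvexOn ℝ Set.univ G)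
    (hGhom : ∀ t : ℝ, 0 < t → ∀ x, G (t • x) = t * G x)
    (hGnonneg : ∀ x, 0 ≤ G x) (hGpos : ∀ x, x ≠ 0 → 0 < G x)
    (T : EuclideanSpace ℝ (Fin n) →ₗ[ℝ] EuclideanSpace ℝ (Fin m))
    {c : ℝ} (hc : 0 ≤ c) {u : EuclideanSpace ℝ (Fin n)}
    (hu : ∀ x, ⟪u, x⟫ ≤ F (T x) + c * G x) :
    ∃ y z, dualFn F y ≤ 1 ∧ dualFn G z ≤ 1 ∧ u = LinearMap.adjoint T y + c • z := by
  obtain ⟨εF, hεF, hlowF⟩ := stmt11_lower hFhom hFconv hFpos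
  obtain ⟨MF, hMF, huppF⟩ := stmt11_upper hFhom hFconv hFnonneg
  obtain ⟨εG, hεG, hlowG⟩ := stmt11_lower hGhom hGconv hGpos
  obtain ⟨MG, hMG, huppG⟩ := stmt11_upper hGhom hGconv hGnonneg
  have hF0 : F 0 = 0 := stmt11_zero hFhom
  have hG0 : G 0 = 0 := stmt11_zero hGhom
  set S : Set (EuclideanSpace ℝ (Fin n)) :=
    {w | ∃ y z, dualFn F y ≤ 1 ∧ dualFn G z ≤ 1 ∧ w = LinearMap.adjoint T y + c • z} with hS
  by_contra hnot
  push_neg at hnot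
  have huS : u ∉ S := by
    rintro ⟨y, z, h1, h2, h3⟩
    exact (hnot y z h1 h2) h3
  -- S is compact
  have hScompact : IsCompact S := by
    have himg : S = (fun p : EuclideanSpace ℝ (Fin m) × EuclideanSpace ℝ (Fin n) =>
        LinearMap.adjoint T p.1 + c • p.2) ''
        ({y | dualFn F y ≤ 1} ×ˢ {z | dualFn G z ≤ 1}) := by
      ext w
      constructor
      · rintro ⟨y, z, h1, h2, rfl⟩
        exact ⟨(y, z), ⟨h1, h2⟩, rfl⟩
      · rintro ⟨⟨y, z⟩, ⟨h1, h2⟩, rfl⟩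
        exact ⟨y, z, h1, h2, rfl⟩
    rw [himg]
    refine IsCompact.image ?_ ?_
    · exact (stmt11_dual_ball_compact hεF hlowF hMF huppF hF0 hFpos).prod
        (stmt11_dual_ball_compact hεG hlowG hMG huppG hG0 hGpos)
    · exact ((LinearMap.adjoint T).continuous_of_finiteDimensional.comp continuous_fst).add
        (continuous_snd.const_smul c)
  have hSconvex : Convex ℝ S := by
    rintro w₁ ⟨y₁, z₁, hy₁, hz₁, rfl⟩ w₂ ⟨y₂, z₂, hy₂, hz₂, rfl⟩ a b ha hb hab
    refine ⟨a • y₁ + b • y₂, a • z₁ + b • z₂, ?_, ?_, ?_⟩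
    · exact stmt11_dual_ball_convex hFpos hεF hlowF hF0 hy₁ hy₂ ha hb hab
    · exact stmt11_dual_ball_convex hGpos hεG hlowG hG0 hz₁ hz₂ ha hb hab
    · simp only [map_add, map_smul, smul_add, smul_smul]
      module
  have hSne : S.Nonempty := by
    refine ⟨LinearMap.adjoint T 0 + c • 0, 0, 0, ?_, ?_, rfl⟩
    · exact stmt11_dual_le zero_le_one hFpos fun x => by simp [hFnonneg x]
    · exact stmt11_dual_le zero_le_one hGpos fun x => by simp [hGnonneg x]
  obtain ⟨f, β, hfS, hfu⟩ :=
    geometric_hahn_banach_closed_point hSconvex hScompact.isClosed huS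
  set v : EuclideanSpace ℝ (Fin n) :=
    (InnerProductSpace.toDual ℝ (EuclideanSpace ℝ (Fin n))).symm f with hv
  have hvx : ∀ x, ⟪v, x⟫ = f x := fun x => by
    rw [hv, InnerProductSpace.toDual_symm_apply]
  obtain ⟨y₀, hy₀, hy₀eq⟩ := stmt11_bidual hFconv hFhom hFnonneg hFpos (T v)
  obtain ⟨z₀, hz₀, hz₀eq⟩ := stmt11_bidual hGconv hGhom hGnonneg hGpos v
  have hw₀S : LinearMap.adjoint T y₀ + c • z₀ ∈ S := ⟨y₀, z₀, hy₀, hz₀, rfl⟩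
  have hcalc : f (LinearMap.adjoint T y₀ + c • z₀) = F (T v) + c * G v := by
    rw [← hvx, inner_add_right, real_inner_smul_right]
    rw [real_inner_comm (LinearMap.adjoint T y₀) v, LinearMap.adjoint_inner_left]
    rw [real_inner_comm z₀ v]
    rw [hy₀eq, hz₀eq]
  have h1 : f (LinearMap.adjoint T y₀ + c • z₀) < β := hfS _ hw₀S
  have h2 : β < f u := hfu
  have h3 : f u = ⟪u, v⟫ := by rw [← hvx, real_inner_comm]
  have h4 : ⟪u, v⟫ ≤ F (T v) + c * G v := hu v
  rw [hcalc] at h1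
  rw [h3] at h2
  linarith

end Sep

/-- duality identities
`min_{G(x) ≤ 1} (F(Tx) − ⟨x,u⟩) = − min_{F*(y) ≤ 1} G*(u − Tᵀy)` and
`max_{G(x) ≤ 1} (F(Tx) − ⟨x,u⟩) = max_{F*(y) ≤ 1} G*(Tᵀy − u)`,
all four extrema being attained. -/
theorem stmt_11 {m n : ℕ}
    (F : EuclideanSpace ℝ (Fin m) → ℝ) (G : EuclideanSpace ℝ (Fin n) → ℝ)
    (hFconv : ConvexOn ℝ Set.univ F)
    (hFhom : ∀ t : ℝ, 0 < t → ∀ x, F (t • x) = t * F x)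
    (hFnonneg : ∀ x, 0 ≤ F x) (hFpos : ∀ x, x ≠ 0 → 0 < F x)
    (hGconv : ConvexOn ℝ Set.univ G)
    (hGhom : ∀ t : ℝ, 0 < t → ∀ x, G (t • x) = t * G x)
    (hGnonneg : ∀ x, 0 ≤ G x) (hGpos : ∀ x, x ≠ 0 → 0 < G x)
    (T : EuclideanSpace ℝ (Fin n) →ₗ[ℝ] EuclideanSpace ℝ (Fin m))
    (u : EuclideanSpace ℝ (Fin n)) :
    (∃ a b : ℝ,
      IsLeast {v | ∃ x, G x ≤ 1 ∧ v = F (T x) - ⟪x, u⟫} a ∧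
      IsLeast {v | ∃ y, dualFn F y ≤ 1 ∧ v = dualFn G (u - LinearMap.adjoint T y)} b ∧
      a = -b) ∧
    (∃ c d : ℝ,
      IsGreatest {v | ∃ x, G x ≤ 1 ∧ v = F (T x) - ⟪x, u⟫} c ∧
      IsGreatest {v | ∃ y, dualFn F y ≤ 1 ∧ v = dualFn G (LinearMap.adjoint T y - u)} d ∧
      c = d) := by
  obtain ⟨εF, hεF, hlowF⟩ := stmt11_lower hFhom hFconv hFpos
  obtain ⟨MF, hMF, huppF⟩ := stmt11_upper hFhom hFconv hFnonneg
  obtain ⟨εG, hεG, hlowG⟩ := stmt11_lower hGhom hGconv hGpos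
  have hF0 : F 0 = 0 := stmt11_zero hFhom
  have hG0 : G 0 = 0 := stmt11_zero hGhom
  have hFcont : Continuous F := stmt11_cont hFconv
  have hGcont : Continuous G := stmt11_cont hGconv
  have hT : Continuous T := T.continuous_of_finiteDimensional
  have hKG : IsCompact {x : EuclideanSpace ℝ (Fin n) | G x ≤ 1} :=
    stmt11_ball_compact hεG hlowG hGcont
  have hKGne : ({x : EuclideanSpace ℝ (Fin n) | G x ≤ 1}).Nonempty := ⟨0, by simp [hG0]⟩
  have hφ : Continuous fun x : EuclideanSpace ℝ (Fin n) => F (T x) - ⟪x, u⟫ :=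
    (hFcont.comp hT).sub (continuous_id.inner continuous_const)
  obtain ⟨xmin, hxmin, hminOn⟩ := hKG.exists_isMinOn hKGne hφ.continuousOn
  obtain ⟨xmax, hxmax, hmaxOn⟩ := hKG.exists_isMaxOn hKGne hφ.continuousOn
  rw [Set.mem_setOf_eq] at hxmin hxmax
  set a : ℝ := F (T xmin) - ⟪xmin, u⟫ with ha
  set cm : ℝ := F (T xmax) - ⟪xmax, u⟫ with hcm
  have hALeast : IsLeast {v | ∃ x, G x ≤ 1 ∧ v = F (T x) - ⟪x, u⟫} a := by
    refine ⟨⟨xmin, hxmin, rfl⟩, ?_⟩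
    rintro v ⟨x, hx, rfl⟩
    exact hminOn hx
  have hCGreatest : IsGreatest {v | ∃ x, G x ≤ 1 ∧ v = F (T x) - ⟪x, u⟫} cm := by
    refine ⟨⟨xmax, hxmax, rfl⟩, ?_⟩
    rintro v ⟨x, hx, rfl⟩
    exact hmaxOn hx
  constructor
  · -- min part
    have ha0 : a ≤ 0 := by
      have h0 : (0 : EuclideanSpace ℝ (Fin n)) ∈ {x | G x ≤ 1} := by simp [hG0]
      have h1 : a ≤ F (T 0) - ⟪(0 : EuclideanSpace ℝ (Fin n)), u⟫ := hminOn h0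
      have h2 : ⟪(0 : EuclideanSpace ℝ (Fin n)), u⟫ = 0 := inner_zero_left u
      rw [map_zero, hF0, h2] at h1
      linarith
    set c : ℝ := -a with hc
    have hc0 : 0 ≤ c := by linarith
    have hkey : ∀ x, ⟪u, x⟫ ≤ F (T x) + c * G x := by
      intro x
      rcases eq_or_ne x 0 with rfl | hx
      · simp [hF0, hG0]
      · have hGx : 0 < G x := hGpos x hx
        have hmem : (G x)⁻¹ • x ∈ {x : EuclideanSpace ℝ (Fin n) | G x ≤ 1} := by
          rw [Set.mem_setOf_eq, hGhom _ (inv_pos.2 hGx), inv_mul_cancel₀ hGx.ne']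
        have h4 : a ≤ (G x)⁻¹ * F (T x) - (G x)⁻¹ * ⟪x, u⟫ := by
          have h5 := hminOn hmem
          have e1 : F (T ((G x)⁻¹ • x)) = (G x)⁻¹ * F (T x) := by
            rw [map_smul, hFhom _ (inv_pos.2 hGx)]
          have e2 : ⟪(G x)⁻¹ • x, u⟫ = (G x)⁻¹ * ⟪x, u⟫ := real_inner_smul_left x u _
          calc a ≤ F (T ((G x)⁻¹ • x)) - ⟪(G x)⁻¹ • x, u⟫ := h5
            _ = (G x)⁻¹ * F (T x) - (G x)⁻¹ * ⟪x, u⟫ := by rw [e1, e2]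
        have hcomm : ⟪u, x⟫ = ⟪x, u⟫ := real_inner_comm x u
        have h5 : a * G x ≤ F (T x) - ⟪x, u⟫ := by
          have h6 := mul_le_mul_of_nonneg_right h4 hGx.le
          calc a * G x ≤ ((G x)⁻¹ * F (T x) - (G x)⁻¹ * ⟪x, u⟫) * G x := h6
            _ = F (T x) - ⟪x, u⟫ := by field_simp
        rw [hcomm, hc]
        linarith
    obtain ⟨y₀, z₀, hy₀, hz₀, hueq⟩ := stmt11_mem_S hFconv hFhom hFnonneg hFpos
      hGconv hGhom hGnonneg hGpos T hc0 hkey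
    have hlb : ∀ y, dualFn F y ≤ 1 → c ≤ dualFn G (u - LinearMap.adjoint T y) := by
      intro y hy
      have h1 : ⟪y, T xmin⟫ ≤ F (T xmin) := by
        calc ⟪y, T xmin⟫ ≤ dualFn F y * F (T xmin) :=
              stmt11_inner_le_dual hεF hlowF hF0 y (T xmin)
          _ ≤ 1 * F (T xmin) := mul_le_mul_of_nonneg_right hy (hFnonneg _)
          _ = F (T xmin) := one_mul _
      have h2 : ⟪u - LinearMap.adjoint T y, xmin⟫ ≤ dualFn G (u - LinearMap.adjoint T y) := by
        calc ⟪u - LinearMap.adjoint T y, xmin⟫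
            ≤ dualFn G (u - LinearMap.adjoint T y) * G xmin :=
              stmt11_inner_le_dual hεG hlowG hG0 _ xmin
          _ ≤ dualFn G (u - LinearMap.adjoint T y) * 1 :=
              mul_le_mul_of_nonneg_left hxmin (stmt11_dual_nonneg hεG hlowG _)
          _ = _ := mul_one _
      have h3 : ⟪u - LinearMap.adjoint T y, xmin⟫ = ⟪u, xmin⟫ - ⟪y, T xmin⟫ := by
        rw [inner_sub_left, LinearMap.adjoint_inner_left]
      have h4 : ⟪u, xmin⟫ = ⟪xmin, u⟫ := real_inner_comm xmin u
      rw [h3, h4] at h2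
      rw [hc, ha]
      linarith
    have hue : u - LinearMap.adjoint T y₀ = c • z₀ := by rw [hueq]; abel
    have hle : dualFn G (c • z₀) ≤ c := by
      refine stmt11_dual_le hc0 hGpos fun x => ?_
      have h1 : ⟪z₀, x⟫ ≤ G x := by
        calc ⟪z₀, x⟫ ≤ dualFn G z₀ * G x := stmt11_inner_le_dual hεG hlowG hG0 z₀ x
          _ ≤ 1 * G x := mul_le_mul_of_nonneg_right hz₀ (hGnonneg x)
          _ = G x := one_mul _
      calc ⟪c • z₀, x⟫ = c * ⟪z₀, x⟫ := real_inner_smul_left z₀ x c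
        _ ≤ c * G x := mul_le_mul_of_nonneg_left h1 hc0
    have hbeq : dualFn G (u - LinearMap.adjoint T y₀) = c := by
      rw [hue]
      exact le_antisymm hle (by rw [← hue]; exact hlb y₀ hy₀)
    refine ⟨a, c, hALeast, ⟨⟨y₀, hy₀, hbeq.symm⟩, ?_⟩, by rw [hc, neg_neg]⟩
    rintro v ⟨y, hy, rfl⟩
    exact hlb y hy
  · -- max part
    have hdbF : IsCompact {y : EuclideanSpace ℝ (Fin m) | dualFn F y ≤ 1} :=
      stmt11_dual_ball_compact hεF hlowF hMF huppF hF0 hFpos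
    have hdbFne : ({y : EuclideanSpace ℝ (Fin m) | dualFn F y ≤ 1}).Nonempty :=
      ⟨0, stmt11_dual_le zero_le_one hFpos fun x => by simp [hFnonneg x]⟩
    have hψ : Continuous fun y : EuclideanSpace ℝ (Fin m) =>
        dualFn G (LinearMap.adjoint T y - u) :=
      (stmt11_dual_cont hεG hlowG hG0 hGpos).comp
        (((LinearMap.adjoint T).continuous_of_finiteDimensional).sub continuous_const)
    obtain ⟨ymax, hymax, hψmax⟩ := hdbF.exists_isMaxOn hdbFne hψ.continuousOn
    rw [Set.mem_setOf_eq] at hymax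
    set d : ℝ := dualFn G (LinearMap.adjoint T ymax - u) with hd
    have hDGreatest : IsGreatest
        {v | ∃ y, dualFn F y ≤ 1 ∧ v = dualFn G (LinearMap.adjoint T y - u)} d := by
      refine ⟨⟨ymax, hymax, rfl⟩, ?_⟩
      rintro v ⟨y, hy, rfl⟩
      exact hψmax hy
    refine ⟨cm, d, hCGreatest, hDGreatest, le_antisymm ?_ ?_⟩
    · -- cm ≤ d
      obtain ⟨y₁, hy₁, hy₁eq⟩ := stmt11_bidual hFconv hFhom hFnonneg hFpos (T xmax)
      have h1 : cm = ⟪LinearMap.adjoint T y₁ - u, xmax⟫ := by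
        rw [hcm, inner_sub_left, LinearMap.adjoint_inner_left, hy₁eq,
          real_inner_comm u xmax]
      have h2 : ⟪LinearMap.adjoint T y₁ - u, xmax⟫ ≤ dualFn G (LinearMap.adjoint T y₁ - u) := by
        calc ⟪LinearMap.adjoint T y₁ - u, xmax⟫
            ≤ dualFn G (LinearMap.adjoint T y₁ - u) * G xmax :=
              stmt11_inner_le_dual hεG hlowG hG0 _ xmax
          _ ≤ dualFn G (LinearMap.adjoint T y₁ - u) * 1 :=
              mul_le_mul_of_nonneg_left hxmax (stmt11_dual_nonneg hεG hlowG _)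
          _ = _ := mul_one _
      have h3 : dualFn G (LinearMap.adjoint T y₁ - u) ≤ d := hψmax hy₁
      linarith [h1 ▸ h2]
    · -- d ≤ cm
      obtain ⟨x₂, hx₂, hx₂eq⟩ := stmt11_dual_attained hεG hlowG hGhom hGcont hGpos
        (LinearMap.adjoint T ymax - u)
      have h1 : ⟪ymax, T x₂⟫ ≤ F (T x₂) := by
        calc ⟪ymax, T x₂⟫ ≤ dualFn F ymax * F (T x₂) :=
              stmt11_inner_le_dual hεF hlowF hF0 ymax (T x₂)
          _ ≤ 1 * F (T x₂) := mul_le_mul_of_nonneg_right hymax (hFnonneg _)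
          _ = F (T x₂) := one_mul _
      have h2 : ⟪LinearMap.adjoint T ymax - u, x₂⟫ = ⟪ymax, T x₂⟫ - ⟪x₂, u⟫ := by
        rw [inner_sub_left, LinearMap.adjoint_inner_left, real_inner_comm u x₂]
      have h3 : F (T x₂) - ⟪x₂, u⟫ ≤ cm := hmaxOn hx₂
      rw [hd, ← hx₂eq, h2]
      linarith
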